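/- Let m ≥ 2 be an integer and let a satisfy 1/m ≤ a and a + 1/m ≤ 1. Then max_{x ∈ [0,1]} |G_a^{-1}(x) − G_{a+1/m}^{-1}(x)| < 11/m; consequently, for V uniform on [0,1], the total variation distance between the laws of G_a(V) and G_{a+1/m}(V) is less than 11/m. -/

import Mathlib

open MeasureTheory

/-- The breakpoint `u₀(b) = 1 - (1-b)·e^b`. -/
noncomputable def u0 (b : ℝ) : ℝ := 1 - (1 - b) * Real.exp b

/-- The function `G_b : [0,1] → [0,1]`:  `G_b(u) = e^{1-b}·u` for `u ≤ u₀(b)` and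
`G_b(u) = e^{e^{-b}(1-u)} - (1-u)·e^{1-b}` for `u > u₀(b)`.  For `a ∈ (0,1]` it is a
strictly increasing continuous bijection of `[0,1]` onto itself. -/
noncomputable def Gfun (b u : ℝ) : ℝ :=
  if u ≤ u0 b then Real.exp (1 - b) * u
  else Real.exp (Real.exp (-b) * (1 - u)) - (1 - u) * Real.exp (1 - b)

/-- The inverse `G_a⁻¹` of `G_a`. -/
noncomputable def Ginv (a : ℝ) : ℝ → ℝ := Function.invFun (Gfun a)

/-- The uniform distribution on `[0,1]` (the law of `V`). -/
noncomputable def unif01 : Measure ℝ := volume.restrict (Set.Icc 0 1)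

/-- The total variation distance `sup_A |μ(A) − ν(A)|` between two Borel probability
measures on `ℝ`, the supremum running over Borel (measurable) sets `A`. -/
noncomputable def tvDistM (μ ν : Measure ℝ) : ℝ :=
  sSup {r : ℝ | ∃ A : Set ℝ, MeasurableSet A ∧ r = |(μ A).toReal - (ν A).toReal|}

/-!
Restricted to `[0,1]`, `G_c⁻¹` is the distribution function of `G_c(V)`. With `φ s = e^s - e s`,
it is `x ↦ e^{c-1} x` below the breakpoint `φ (1 - c)` and sends `φ s` to `1 - s e^c` above it.
Hence, for `a ≤ b`, `D = G_a⁻¹ - G_b⁻¹` decreases on `[0, φ (1 - a)]`, increases on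
`[φ (1 - a), φ (1 - b)]` (by convexity of `φ`, as soon as `e^b ≤ e^a + 1`, e.g. when
`b - a ≤ 1/3`) and decreases on `[φ (1 - b), 1]`. It vanishes at `0` and `1`, and its extreme
values lie within `b - a` of `0`; this is the uniform bound. Splitting `D = P - (P - D)` with `P`
the increasing part of `D` gives `μ_a + d(P - D) = μ_b + dP` for the two laws and two Stieltjes
measures, each of mass `D (φ (1 - b)) - D (φ (1 - a)) ≤ 2 (b - a)`, which bounds the total
variation distance. For `m = 2` the trivial bound `1 < 11/2` suffices.
-/

open Real Set Filter Topology ProbabilityTheory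

lemma exp_sub_exp_le_mul_sub (x y : ℝ) : exp y - exp x ≤ exp y * (y - x) := by
  have h := add_one_le_exp (x - y)
  have hxy : exp y * exp (x - y) = exp x := by rw [← exp_add]; ring_nf
  nlinarith [exp_pos y]

lemma one_sub_mul_exp_le_one (c : ℝ) : (1 - c) * exp c ≤ 1 := by
  have := exp_sub_exp_le_mul_sub 0 c
  rw [exp_zero] at this
  linarith

lemma abs_le_of_antitoneOn_monotoneOn_antitoneOn {f : ℝ → ℝ} {p x₁ x₂ q r : ℝ}
    (h₁ : AntitoneOn f (Icc p x₁)) (h₂ : MonotoneOn f (Icc x₁ x₂)) (h₃ : AntitoneOn f (Icc x₂ q))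
    (hpx₁ : p ≤ x₁) (hx₁x₂ : x₁ ≤ x₂) (hx₂q : x₂ ≤ q)
    (hp : f p = 0) (hq : f q = 0) (hx₁ : -r ≤ f x₁) (hx₂ : f x₂ ≤ r)
    {x : ℝ} (hx : x ∈ Icc p q) : |f x| ≤ r := by
  have hmid := h₂ ⟨le_rfl, hx₁x₂⟩ ⟨hx₁x₂, le_rfl⟩ hx₁x₂
  rw [abs_le]
  rcases le_total x x₁ with h | h
  · have := h₁ ⟨le_rfl, hpx₁⟩ ⟨hx.1, h⟩ hx.1
    have := h₁ ⟨hx.1, h⟩ ⟨hpx₁, le_rfl⟩ h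
    constructor <;> linarith
  rcases le_total x x₂ with h' | h'
  · have := h₂ ⟨le_rfl, hx₁x₂⟩ ⟨h, h'⟩ h
    have := h₂ ⟨h, h'⟩ ⟨hx₁x₂, le_rfl⟩ h'
    constructor <;> linarith
  · have := h₃ ⟨le_rfl, hx₂q⟩ ⟨h', hx.2⟩ h'
    have := h₃ ⟨h', hx.2⟩ ⟨hx₂q, le_rfl⟩ hx.2
    constructor <;> linarith

lemma abs_measureReal_sub_le_of_add_eq {Ω : Type*} [MeasurableSpace Ω] {μ ν ρ σ : Measure Ω}
    [IsFiniteMeasure μ] [IsFiniteMeasure ν] [IsFiniteMeasure ρ] [IsFiniteMeasure σ]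
    (h : μ + ρ = ν + σ) {r : ℝ} (hρ : ρ.real univ ≤ r) (hσ : σ.real univ ≤ r) (s : Set Ω) :
    |μ.real s - ν.real s| ≤ r := by
  have hs : (μ + ρ).real s = (ν + σ).real s := by rw [h]
  rw [measureReal_add_apply, measureReal_add_apply] at hs
  have := measureReal_mono (μ := ρ) (subset_univ s)
  have := measureReal_mono (μ := σ) (subset_univ s)
  have := measureReal_nonneg (μ := ρ) (s := s)
  have := measureReal_nonneg (μ := σ) (s := s)
  rw [abs_le]
  constructor <;> linarith

section UpPart

variable {D : ℝ → ℝ} {x₁ x₂ : ℝ}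

/-- The increasing part of a function that decreases, increases on `[x₁, x₂]`, then decreases. -/
noncomputable def upPart (D : ℝ → ℝ) (x₁ x₂ x : ℝ) : ℝ := D (max x₁ (min x x₂)) - D x₁

lemma upPart_of_le {x : ℝ} (hx : x ≤ x₁) : upPart D x₁ x₂ x = 0 := by
  simp [upPart, hx]

lemma upPart_of_mem {x : ℝ} (hx : x ∈ Icc x₁ x₂) : upPart D x₁ x₂ x = D x - D x₁ := by
  simp [upPart, hx.1, hx.2]

lemma upPart_of_ge {x : ℝ} (hx : x₂ ≤ x) (h : x₁ ≤ x₂) : upPart D x₁ x₂ x = D x₂ - D x₁ := by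
  simp [upPart, hx, h]

lemma monotone_upPart (h : x₁ ≤ x₂) (h₂ : MonotoneOn D (Icc x₁ x₂)) :
    Monotone (upPart D x₁ x₂) := by
  intro x y hxy
  have hmem : ∀ z, max x₁ (min z x₂) ∈ Icc x₁ x₂ := fun z =>
    ⟨le_max_left _ _, max_le h (min_le_right _ _)⟩
  exact sub_le_sub_right (h₂ (hmem x) (hmem y) (max_le_max le_rfl (min_le_min_right _ hxy))) _

lemma monotone_upPart_sub (h : x₁ ≤ x₂) (h₁ : AntitoneOn D (Iic x₁))
    (h₃ : AntitoneOn D (Ici x₂)) : Monotone fun x => upPart D x₁ x₂ x - D x := by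
  refine MonotoneOn.Iic_union_Ici (a := x₁) (fun x hx y hy hxy => ?_) ?_
  · simp only [upPart_of_le hx, upPart_of_le hy, zero_sub, neg_le_neg_iff]
    exact h₁ hx hy hxy
  rw [← Icc_union_Ici_eq_Ici h]
  refine MonotoneOn.union_right (fun x hx y hy _ => ?_) (fun x hx y hy hxy => ?_)
    (isGreatest_Icc h) isLeast_Ici
  · simp [upPart_of_mem hx, upPart_of_mem hy]
  · simp only [upPart_of_ge hx h, upPart_of_ge hy h]
    linarith [h₃ hx hy hxy]

lemma continuousWithinAt_upPart (hD : ∀ x, ContinuousWithinAt D (Ici x) x) (x : ℝ) :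
    ContinuousWithinAt (upPart D x₁ x₂) (Ici x) x := by
  have hg : Continuous fun z : ℝ => max x₁ (min z x₂) := by fun_prop
  refine ((hD _).comp hg.continuousWithinAt fun z hz => ?_).sub continuousWithinAt_const
  exact max_le_max le_rfl (min_le_min_right _ (mem_Ici.1 hz))

lemma tendsto_upPart_atBot : Tendsto (upPart D x₁ x₂) atBot (𝓝 0) :=
  tendsto_const_nhds.congr' ((eventually_le_atBot x₁).mono fun _ hx => (upPart_of_le hx).symm)

lemma tendsto_upPart_atTop (h : x₁ ≤ x₂) :
    Tendsto (upPart D x₁ x₂) atTop (𝓝 (D x₂ - D x₁)) :=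
  tendsto_const_nhds.congr' ((eventually_ge_atTop x₂).mono fun _ hx => (upPart_of_ge hx h).symm)

end UpPart

theorem abs_measureReal_sub_le_of_cdf_sub {μ ν : Measure ℝ} [IsProbabilityMeasure μ]
    [IsProbabilityMeasure ν] {x₁ x₂ : ℝ} (h : x₁ ≤ x₂)
    (h₁ : AntitoneOn (fun x => cdf μ x - cdf ν x) (Iic x₁))
    (h₂ : MonotoneOn (fun x => cdf μ x - cdf ν x) (Icc x₁ x₂))
    (h₃ : AntitoneOn (fun x => cdf μ x - cdf ν x) (Ici x₂)) (s : Set ℝ) :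
    |μ.real s - ν.real s| ≤ (cdf μ x₂ - cdf ν x₂) - (cdf μ x₁ - cdf ν x₁) := by
  set D := fun x => cdf μ x - cdf ν x
  have hD : ∀ x, ContinuousWithinAt D (Ici x) x := fun x =>
    ((cdf μ).right_continuous x).sub ((cdf ν).right_continuous x)
  have hbot : Tendsto D atBot (𝓝 0) := by
    simpa using (tendsto_cdf_atBot μ).sub (tendsto_cdf_atBot ν)
  have htop : Tendsto D atTop (𝓝 0) := by
    simpa using (tendsto_cdf_atTop μ).sub (tendsto_cdf_atTop ν)
  let P : StieltjesFunction ℝ :=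
    ⟨upPart D x₁ x₂, monotone_upPart h h₂, continuousWithinAt_upPart hD⟩
  let N : StieltjesFunction ℝ := ⟨fun x => upPart D x₁ x₂ x - D x, monotone_upPart_sub h h₁ h₃,
    fun x => (continuousWithinAt_upPart hD x).sub (hD x)⟩
  have hPN : cdf μ + N = cdf ν + P := by
    ext x
    simp only [StieltjesFunction.add_apply, N, P]
    ring
  have hP := P.measure_univ tendsto_upPart_atBot (tendsto_upPart_atTop h)
  have hN := N.measure_univ (tendsto_upPart_atBot.sub hbot) ((tendsto_upPart_atTop h).sub htop)
  have := P.isFiniteMeasure tendsto_upPart_atBot (tendsto_upPart_atTop h)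
  have := N.isFiniteMeasure (tendsto_upPart_atBot.sub hbot) ((tendsto_upPart_atTop h).sub htop)
  have hr : 0 ≤ D x₂ - D x₁ := sub_nonneg.2 (h₂ ⟨le_rfl, h⟩ ⟨h, le_rfl⟩ h)
  refine abs_measureReal_sub_le_of_add_eq (ρ := N.measure) (σ := P.measure) ?_ ?_ ?_ s
  · have : (cdf μ + N).measure = (cdf ν + P).measure := by rw [hPN]
    rwa [StieltjesFunction.measure_add, StieltjesFunction.measure_add, measure_cdf,
      measure_cdf] at this
  · simp [Measure.real, hN, hr, D]
  · simp [Measure.real, hP, hr, D]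

noncomputable def clamp01 (x : ℝ) : ℝ := max (min x 1) 0

lemma monotone_clamp01 : Monotone clamp01 := fun _ _ h =>
  max_le_max (min_le_min_right 1 h) le_rfl

lemma clamp01_of_mem {x : ℝ} (hx : x ∈ Icc 0 1) : clamp01 x = x := by
  simp [clamp01, hx.1, hx.2]

lemma clamp01_mem (x : ℝ) : clamp01 x ∈ Icc 0 1 :=
  ⟨le_max_right _ _, max_le (min_le_right _ _) zero_le_one⟩

lemma clamp01_comp {f : ℝ → ℝ} (hf : Monotone f) (h0 : f 0 = 0) (h1 : f 1 = 1) (x : ℝ) :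
    clamp01 (f x) = f (clamp01 x) := by
  rcases le_total x 0 with hx | hx
  · have : f x ≤ 0 := h0 ▸ hf hx
    simp [clamp01, hx, h0, this]
  rcases le_total x 1 with hx1 | hx1
  · rw [clamp01_of_mem ⟨hx, hx1⟩, clamp01_of_mem ⟨h0 ▸ hf hx, h1 ▸ hf hx1⟩]
  · have : 1 ≤ f x := h1 ▸ hf hx1
    simp [clamp01, hx1, h1, this]

/-- On its second branch `G_c u = φ (e^{-c} (1 - u))`. -/
noncomputable def phi (s : ℝ) : ℝ := exp s - exp 1 * s

lemma phi_zero : phi 0 = 1 := by simp [phi]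

lemma continuous_phi : Continuous phi := by unfold phi; fun_prop

lemma phi_nonneg (s : ℝ) : 0 ≤ phi s := by
  have := exp_sub_exp_le_mul_sub s 1
  unfold phi
  nlinarith

lemma strictAntiOn_phi : StrictAntiOn phi (Iic 1) := by
  refine strictAntiOn_of_deriv_neg (convex_Iic 1) continuous_phi.continuousOn fun x hx => ?_
  rw [interior_Iic, mem_Iio] at hx
  have hd : HasDerivAt phi (exp x - exp 1 * 1) x :=
    (hasDerivAt_exp x).sub ((hasDerivAt_id x).const_mul (exp 1))
  rw [hd.deriv, mul_one, sub_neg]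
  exact exp_lt_exp.2 hx

lemma phi_le_phi_iff {s t : ℝ} (hs : s ≤ 1) (ht : t ≤ 1) : phi s ≤ phi t ↔ t ≤ s :=
  strictAntiOn_phi.le_iff_ge hs ht

lemma phi_sub_phi_le (s t : ℝ) : phi t - phi s ≤ (exp 1 - exp t) * (s - t) := by
  have := exp_sub_exp_le_mul_sub s t
  unfold phi
  nlinarith

lemma Icc_phi_subset_image {t : ℝ} (ht : 0 ≤ t) : Icc (phi t) 1 ⊆ phi '' Icc 0 t := by
  simpa [phi_zero] using intermediate_value_Icc' ht continuous_phi.continuousOn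

section Gfun

variable {c u : ℝ}

lemma u0_nonneg (c : ℝ) : 0 ≤ u0 c := by
  unfold u0; linarith [one_sub_mul_exp_le_one c]

lemma u0_le_one (hc : c ≤ 1) : u0 c ≤ 1 := by
  unfold u0; nlinarith [exp_pos c]

lemma exp_neg_mul_one_sub_u0 (c : ℝ) : exp (-c) * (1 - u0 c) = 1 - c := by
  have : exp (-c) * exp c = 1 := by rw [← exp_add]; simp
  unfold u0
  linear_combination (1 - c) * this

lemma exp_mul_u0 (c : ℝ) : exp (1 - c) * u0 c = phi (1 - c) := by
  have : exp (1 - c) * exp c = exp 1 := by rw [← exp_add]; ring_nf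
  unfold u0 phi
  linear_combination (c - 1) * this

lemma exp_sub_mul_exp_eq_phi (c u : ℝ) :
    exp (exp (-c) * (1 - u)) - (1 - u) * exp (1 - c) = phi (exp (-c) * (1 - u)) := by
  have : exp 1 * exp (-c) = exp (1 - c) := by rw [← exp_add]; ring_nf
  unfold phi
  linear_combination (1 - u) * this

lemma Gfun_of_le (h : u ≤ u0 c) : Gfun c u = exp (1 - c) * u := if_pos h

lemma Gfun_of_u0_le (h : u0 c ≤ u) : Gfun c u = phi (exp (-c) * (1 - u)) := by
  rcases h.eq_or_lt with rfl | h
  · rw [Gfun_of_le le_rfl, exp_mul_u0, exp_neg_mul_one_sub_u0]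
  · rw [Gfun, if_neg h.not_ge, exp_sub_mul_exp_eq_phi]

lemma exp_neg_mul_one_sub_le (h : u0 c ≤ u) : exp (-c) * (1 - u) ≤ 1 - c := by
  rw [← exp_neg_mul_one_sub_u0 c]
  gcongr

lemma continuous_Gfun (c : ℝ) : Continuous (Gfun c) :=
  Continuous.if_le (by fun_prop) (by fun_prop) continuous_id continuous_const fun u hu => by
    rw [exp_sub_mul_exp_eq_phi, hu, exp_neg_mul_one_sub_u0, exp_mul_u0]

lemma strictMono_Gfun (hc : 0 ≤ c) : StrictMono (Gfun c) := by
  refine StrictMonoOn.Iic_union_Ici (a := u0 c) (fun u hu v hv huv => ?_) fun u hu v hv huv => ?_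
  · rw [Gfun_of_le hu, Gfun_of_le hv]
    exact mul_lt_mul_of_pos_left huv (exp_pos _)
  · have hmem : ∀ {w}, u0 c ≤ w → exp (-c) * (1 - w) ∈ Iic 1 := fun hw =>
      (exp_neg_mul_one_sub_le hw).trans (by linarith)
    rw [Gfun_of_u0_le hu, Gfun_of_u0_le hv]
    exact strictAntiOn_phi (hmem hv) (hmem hu) (by gcongr)

lemma surjective_Gfun (c : ℝ) : Function.Surjective (Gfun c) := by
  refine (continuous_Gfun c).surjective ?_ ?_
  · refine tendsto_atTop_mono' _ ((eventually_gt_atTop (u0 c)).mono fun u hu => ?_)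
      ((tendsto_atTop_add_const_right _ (-1) tendsto_id).atTop_mul_const (exp_pos (1 - c)))
    rw [Gfun, if_neg hu.not_ge, id]
    linarith [exp_pos (exp (-c) * (1 - u))]
  · exact (tendsto_id.const_mul_atBot (exp_pos (1 - c))).congr'
      ((eventually_le_atBot (u0 c)).mono fun u hu => (Gfun_of_le hu).symm)

end Gfun

section Ginv

variable {c : ℝ}

lemma Gfun_Ginv (c x : ℝ) : Gfun c (Ginv c x) = x :=
  Function.invFun_eq (surjective_Gfun c x)

lemma Ginv_Gfun (hc : 0 ≤ c) (u : ℝ) : Ginv c (Gfun c u) = u :=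
  Function.leftInverse_invFun (strictMono_Gfun hc).injective u

lemma Ginv_le_iff (hc : 0 ≤ c) {u x : ℝ} : u ≤ Ginv c x ↔ Gfun c u ≤ x := by
  rw [← (strictMono_Gfun hc).le_iff_le, Gfun_Ginv]

lemma monotone_Ginv (hc : 0 ≤ c) : Monotone (Ginv c) := fun x y hxy =>
  (Ginv_le_iff hc).2 (by rwa [Gfun_Ginv])

lemma Ginv_zero (hc : 0 ≤ c) : Ginv c 0 = 0 := by
  simpa [Gfun_of_le (u0_nonneg c)] using Ginv_Gfun hc 0

lemma Ginv_one (hc : 0 ≤ c) (hc1 : c ≤ 1) : Ginv c 1 = 1 := by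
  simpa [Gfun_of_u0_le (u0_le_one hc1), phi_zero] using Ginv_Gfun hc 1

lemma Ginv_of_le_phi (hc : 0 ≤ c) {x : ℝ} (hx : x ≤ phi (1 - c)) :
    Ginv c x = exp (c - 1) * x := by
  have hu : Ginv c x ≤ u0 c := by
    rw [← Ginv_Gfun hc (u0 c), Gfun_of_le le_rfl, exp_mul_u0]
    exact monotone_Ginv hc hx
  have hG := Gfun_Ginv c x
  rw [Gfun_of_le hu] at hG
  have he : exp (c - 1) * exp (1 - c) = 1 := by rw [← exp_add]; ring_nf; exact exp_zero
  linear_combination exp (c - 1) * hG - Ginv c x * he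

lemma Ginv_phi (hc : 0 ≤ c) {s : ℝ} (hs : s ≤ 1 - c) : Ginv c (phi s) = 1 - s * exp c := by
  have he : exp (-c) * exp c = 1 := by rw [← exp_add]; simp
  have hu : u0 c ≤ 1 - s * exp c := by
    unfold u0; nlinarith [exp_pos c]
  rw [← Ginv_Gfun hc (1 - s * exp c), Gfun_of_u0_le hu]
  congr 2
  linear_combination -s * he

end Ginv

section Difference

variable {a b : ℝ}

lemma phi_one_sub_mem_Icc {c : ℝ} (hc : 0 ≤ c) (hc1 : c ≤ 1) : phi (1 - c) ∈ Icc 0 1 :=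
  ⟨phi_nonneg _, phi_zero ▸ (phi_le_phi_iff (s := 1 - c) (by linarith) zero_le_one).2 (by linarith)⟩

lemma phi_one_sub_le_phi_one_sub (ha : 0 ≤ a) (hab : a ≤ b) : phi (1 - a) ≤ phi (1 - b) :=
  (phi_le_phi_iff (by linarith) (by linarith)).2 (by linarith)

lemma antitoneOn_Ginv_sub_Ginv_Iic (ha : 0 ≤ a) (hab : a ≤ b) :
    AntitoneOn (fun x => Ginv a x - Ginv b x) (Iic (phi (1 - a))) := by
  intro x hx y hy hxy
  dsimp only
  have hb := phi_one_sub_le_phi_one_sub ha hab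
  simp only [mem_Iic] at hx hy
  rw [Ginv_of_le_phi ha hx, Ginv_of_le_phi ha hy, Ginv_of_le_phi (ha.trans hab) (hx.trans hb),
    Ginv_of_le_phi (ha.trans hab) (hy.trans hb)]
  have := mul_le_mul_of_nonneg_left hxy (sub_nonneg.2 (exp_le_exp.2 (by linarith : a - 1 ≤ b - 1)))
  linarith

lemma monotoneOn_Ginv_sub_Ginv_Icc (ha : 0 ≤ a) (hab : a ≤ b) (hb1 : b ≤ 1)
    (hexp : exp b ≤ exp a + 1) :
    MonotoneOn (fun x => Ginv a x - Ginv b x) (Icc (phi (1 - a)) (phi (1 - b))) := by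
  have hb : 0 ≤ b := ha.trans hab
  have hφb : phi (1 - b) ≤ 1 := (phi_one_sub_mem_Icc hb hb1).2
  rintro _ ⟨hxa, hxb⟩ _ ⟨hya, hyb⟩ hxy
  obtain ⟨s, ⟨hs0, hs⟩, rfl⟩ := Icc_phi_subset_image (by linarith) ⟨hxa, hxb.trans hφb⟩
  obtain ⟨t, ⟨ht0, ht⟩, rfl⟩ := Icc_phi_subset_image (by linarith) ⟨hya, hyb.trans hφb⟩
  have hts : t ≤ s := (phi_le_phi_iff (by linarith) (by linarith)).1 hxy
  have hbt : 1 - b ≤ t := (phi_le_phi_iff (by linarith) (by linarith)).1 hyb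
  dsimp only
  rw [Ginv_phi ha hs, Ginv_phi ha ht, Ginv_of_le_phi hb hxb, Ginv_of_le_phi hb hyb]
  -- `G_b⁻¹` has slope `e^{b-1}` here, `G_a⁻¹` has slope `e^a / (e - e^t)` at `φ t`
  have hslope : exp (b - 1) * (exp 1 - exp t) ≤ exp a := by
    have h1 : exp (b - 1) * exp 1 = exp b := by rw [← exp_add]; ring_nf
    have h2 : 1 ≤ exp (b - 1) * exp t := by
      rw [← exp_add]; exact one_le_exp (by linarith)
    linarith
  have := mul_le_mul_of_nonneg_left (phi_sub_phi_le s t) (exp_pos (b - 1)).le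
  have := mul_le_mul_of_nonneg_right hslope (sub_nonneg.2 hts)
  nlinarith

lemma antitoneOn_Ginv_sub_Ginv_Icc (ha : 0 ≤ a) (hab : a ≤ b) (hb1 : b ≤ 1) :
    AntitoneOn (fun x => Ginv a x - Ginv b x) (Icc (phi (1 - b)) 1) := by
  have hb : 0 ≤ b := ha.trans hab
  rintro _ hx _ hy hxy
  obtain ⟨s, ⟨hs0, hs⟩, rfl⟩ := Icc_phi_subset_image (by linarith) hx
  obtain ⟨t, ⟨ht0, ht⟩, rfl⟩ := Icc_phi_subset_image (by linarith) hy
  have hts : t ≤ s := (phi_le_phi_iff (by linarith) (by linarith)).1 hxy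
  dsimp only
  rw [Ginv_phi ha (by linarith), Ginv_phi ha (by linarith), Ginv_phi hb hs, Ginv_phi hb ht]
  have := mul_le_mul_of_nonneg_right hts (sub_nonneg.2 (exp_le_exp.2 hab))
  linarith

lemma neg_sub_le_Ginv_sub_Ginv_phi (ha : 0 ≤ a) (hab : a ≤ b) (hb1 : b ≤ 1) :
    -(b - a) ≤ Ginv a (phi (1 - a)) - Ginv b (phi (1 - a)) := by
  obtain ⟨hx0, hx1⟩ := phi_one_sub_mem_Icc ha (hab.trans hb1)
  rw [Ginv_of_le_phi ha le_rfl,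
    Ginv_of_le_phi (ha.trans hab) (phi_one_sub_le_phi_one_sub ha hab)]
  have hdiff := exp_sub_exp_le_mul_sub (a - 1) (b - 1)
  have hb : exp (b - 1) ≤ 1 := exp_le_one_iff.2 (by linarith)
  have := mul_le_mul_of_nonneg_right hb (by linarith : 0 ≤ b - a)
  have := exp_le_exp.2 (by linarith : a - 1 ≤ b - 1)
  nlinarith

lemma Ginv_sub_Ginv_phi_le (ha : 0 ≤ a) (hab : a ≤ b) (hb1 : b ≤ 1) :
    Ginv a (phi (1 - b)) - Ginv b (phi (1 - b)) ≤ b - a := by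
  rw [Ginv_phi ha (by linarith), Ginv_phi (ha.trans hab) le_rfl]
  have hdiff := mul_le_mul_of_nonneg_left (exp_sub_exp_le_mul_sub a b) (by linarith : 0 ≤ 1 - b)
  have := mul_le_mul_of_nonneg_right (one_sub_mul_exp_le_one b) (by linarith : 0 ≤ b - a)
  nlinarith

end Difference

instance : IsProbabilityMeasure unif01 := ⟨by simp [unif01]⟩

lemma unif01_real_Iic (y : ℝ) : unif01.real (Iic y) = clamp01 y := by
  have : Iic y ∩ Icc 0 1 = Icc 0 (min y 1) := by
    ext u; simp only [mem_inter_iff, mem_Iic, mem_Icc, le_min_iff]; tauto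
  rw [Measure.real, unif01, Measure.restrict_apply measurableSet_Iic, this, Real.volume_Icc,
    ENNReal.toReal_ofReal', sub_zero, clamp01]

instance (c : ℝ) : IsProbabilityMeasure (unif01.map (Gfun c)) :=
  Measure.isProbabilityMeasure_map (continuous_Gfun c).aemeasurable

lemma cdf_map_Gfun {c : ℝ} (hc : 0 ≤ c) (hc1 : c ≤ 1) (x : ℝ) :
    cdf (unif01.map (Gfun c)) x = Ginv c (clamp01 x) := by
  have hpre : Gfun c ⁻¹' Iic x = Iic (Ginv c x) := by
    ext u; exact (Ginv_le_iff hc).symm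
  rw [cdf_eq_real, map_measureReal_apply (continuous_Gfun c).measurable measurableSet_Iic, hpre,
    unif01_real_Iic, clamp01_comp (monotone_Ginv hc) (Ginv_zero hc) (Ginv_one hc hc1)]

section Law

variable {a b : ℝ}

lemma Ginv_mem_Icc {c x : ℝ} (hc : 0 ≤ c) (hc1 : c ≤ 1) (hx : x ∈ Icc 0 1) :
    Ginv c x ∈ Icc 0 1 :=
  ⟨Ginv_zero hc ▸ monotone_Ginv hc hx.1, Ginv_one hc hc1 ▸ monotone_Ginv hc hx.2⟩

theorem abs_Ginv_sub_Ginv_le (ha : 0 ≤ a) (hab : a ≤ b) (hb1 : b ≤ 1)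
    (hexp : exp b ≤ exp a + 1) {x : ℝ} (hx : x ∈ Icc 0 1) : |Ginv a x - Ginv b x| ≤ b - a :=
  abs_le_of_antitoneOn_monotoneOn_antitoneOn
    ((antitoneOn_Ginv_sub_Ginv_Iic ha hab).mono Icc_subset_Iic_self)
    (monotoneOn_Ginv_sub_Ginv_Icc ha hab hb1 hexp) (antitoneOn_Ginv_sub_Ginv_Icc ha hab hb1)
    (phi_one_sub_mem_Icc ha (hab.trans hb1)).1 (phi_one_sub_le_phi_one_sub ha hab)
    (phi_one_sub_mem_Icc (ha.trans hab) hb1).2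
    (by simp [Ginv_zero ha, Ginv_zero (ha.trans hab)])
    (by simp [Ginv_one ha (hab.trans hb1), Ginv_one (ha.trans hab) hb1])
    (neg_sub_le_Ginv_sub_Ginv_phi ha hab hb1) (Ginv_sub_Ginv_phi_le ha hab hb1) hx

theorem abs_map_Gfun_real_sub_le (ha : 0 ≤ a) (hab : a ≤ b) (hb1 : b ≤ 1)
    (hexp : exp b ≤ exp a + 1) (s : Set ℝ) :
    |(unif01.map (Gfun a)).real s - (unif01.map (Gfun b)).real s| ≤ 2 * (b - a) := by
  have hb : 0 ≤ b := ha.trans hab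
  have hx₁ := phi_one_sub_mem_Icc ha (hab.trans hb1)
  have hx₂ := phi_one_sub_mem_Icc hb hb1
  have hcdf : (fun x => cdf (unif01.map (Gfun a)) x - cdf (unif01.map (Gfun b)) x) =
      (fun x => Ginv a x - Ginv b x) ∘ clamp01 := by
    ext x
    simp [cdf_map_Gfun ha (hab.trans hb1), cdf_map_Gfun hb hb1]
  have hclamp := monotone_clamp01.monotoneOn
  have key := abs_measureReal_sub_le_of_cdf_sub (phi_one_sub_le_phi_one_sub ha hab)
    (hcdf ▸ (antitoneOn_Ginv_sub_Ginv_Iic ha hab).comp_MonotoneOn (hclamp _)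
      fun x hx => (monotone_clamp01 hx).trans_eq (clamp01_of_mem hx₁))
    (hcdf ▸ (monotoneOn_Ginv_sub_Ginv_Icc ha hab hb1 hexp).comp (hclamp _)
      fun x hx => by rwa [clamp01_of_mem ⟨hx₁.1.trans hx.1, hx.2.trans hx₂.2⟩])
    (hcdf ▸ (antitoneOn_Ginv_sub_Ginv_Icc ha hab hb1).comp_MonotoneOn (hclamp _)
      fun x hx => ⟨(clamp01_of_mem hx₂).symm.trans_le (monotone_clamp01 hx), (clamp01_mem x).2⟩) s
  rw [cdf_map_Gfun ha (hab.trans hb1), cdf_map_Gfun hb hb1, cdf_map_Gfun ha (hab.trans hb1),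
    cdf_map_Gfun hb hb1, clamp01_of_mem hx₁, clamp01_of_mem hx₂] at key
  linarith [neg_sub_le_Ginv_sub_Ginv_phi ha hab hb1, Ginv_sub_Ginv_phi_le ha hab hb1]

end Law

lemma exp_le_exp_add_one_of_sub_le {a b : ℝ} (hb1 : b ≤ 1) (hab : 0 ≤ b - a) (h : b - a ≤ 1 / 3) :
    exp b ≤ exp a + 1 := by
  have := exp_sub_exp_le_mul_sub a b
  have := mul_le_mul (exp_le_exp.2 hb1) h hab (exp_pos 1).le
  linarith [exp_one_lt_d9]

/-- For `b = a + 1/m` (with `1/m ≤ a` and `b ≤ 1`),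
`max_{x ∈ [0,1]} |G_a⁻¹(x) − G_b⁻¹(x)| < 11/m`; consequently, for `V` uniform on `[0,1]`,
the total variation distance between the laws of `G_a(V)` and `G_b(V)` is less than
`11/m`. -/
theorem tv_G_lt (m : ℕ) (hm : 2 ≤ m) (a : ℝ) (ha : 1 / (m : ℝ) ≤ a)
    (hab : a + 1 / (m : ℝ) ≤ 1) :
    sSup ((fun x => |Ginv a x - Ginv (a + 1 / m) x|) '' Set.Icc (0 : ℝ) 1) < 11 / m ∧
    tvDistM (Measure.map (Gfun a) unif01) (Measure.map (Gfun (a + 1 / m)) unif01) <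
      11 / m := by
  have hm0 : (0 : ℝ) < m := Nat.cast_pos.2 (by omega)
  have h11 : 11 / (m : ℝ) = 11 * (1 / m) := by ring
  set δ := 1 / (m : ℝ) with hδ
  have hδ0 : 0 < δ := by positivity
  have ha0 : 0 ≤ a := hδ0.le.trans ha
  obtain ⟨r, hr, hsup, htv⟩ : ∃ r < 11 * δ,
      (∀ x ∈ Icc (0 : ℝ) 1, |Ginv a x - Ginv (a + δ) x| ≤ r) ∧
      ∀ A, |(Measure.map (Gfun a) unif01).real A - (Measure.map (Gfun (a + δ)) unif01).real A|
        ≤ r := by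
    rcases hm.eq_or_lt with rfl | hm3
    · refine ⟨1, by norm_num [hδ], fun x hx => ?_, fun A => ?_⟩
      · obtain ⟨h₁, h₂⟩ := Ginv_mem_Icc ha0 (by linarith) hx
        obtain ⟨h₃, h₄⟩ := Ginv_mem_Icc (by positivity) hab hx
        exact abs_sub_le_of_nonneg_of_le h₁ h₂ h₃ h₄
      · exact abs_sub_le_of_nonneg_of_le measureReal_nonneg measureReal_le_one
          measureReal_nonneg measureReal_le_one
    · have hδ3 : δ ≤ 1 / 3 := by
        rw [hδ]; gcongr; exact_mod_cast hm3
      have hexp := exp_le_exp_add_one_of_sub_le (a := a) hab (by simp [hδ0.le]) (by simpa using hδ3)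
      refine ⟨2 * δ, by linarith, fun x hx => ?_, fun A => ?_⟩
      · exact (abs_Ginv_sub_Ginv_le ha0 (by linarith) hab hexp hx).trans (by linarith)
      · simpa using abs_map_Gfun_real_sub_le ha0 (by linarith) hab hexp A
  have hr0 : 0 ≤ r := (abs_nonneg _).trans (hsup 0 ⟨le_rfl, zero_le_one⟩)
  rw [h11]
  refine ⟨(Real.sSup_le ?_ hr0).trans_lt hr, (Real.sSup_le ?_ hr0).trans_lt hr⟩
  · rintro _ ⟨x, hx, rfl⟩
    exact hsup x hx
  · rintro _ ⟨A, -, rfl⟩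
    exact htv A
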